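/- For η > 0 and ψ ∈ ℝ, 1/(cosh η − cos ψ)³ = (1/(2 sinh⁵η))·Σ_{n=0}^∞ ε_n·cos(nψ)·e^{−nη}·[(n²−1)sinh²η + 3n·sinh η·cosh η + 3cosh²η], where ε_n = 2 − δ_{n,0}, and the series converges absolutely. -/

import Mathlib

noncomputable def neumann (n : ℕ) : ℝ := if n = 0 then 1 else 2

/-!
Put `s = sinh η`, `c = cosh η`, `P(n) = (n² - 1) s² + 3 n s c + 3 c²` and `z = e^{-η + iψ}`, so
that the series is the real part of `Σ ε_n P(n) zⁿ`. In the binomial basis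
`2 P(n) = 4 s² C(n+2, 2) + 6 s (c - s) C(n+1, 1) + 6 c (c - s)`, so this power series sums to a
rational function `G(z)` with poles of order at most three at `z = 1`. Its real part
`(G(z) + G(z̄)) / 2` collapses to `2 s⁵ / (c - cos ψ)³` because
`(1 - z)(1 - z̄) = 2 e^{-η} (c - cos ψ)`. Absolute convergence holds because `P(n) ≥ 0` and
`|ε_n cos(nψ)| ≤ 2`, so the terms are dominated by `2 P(n) e^{-nη}`.
-/

open Complex

section

variable {K : Type*}

def invCubeCoeff [CommRing K] (s c : K) (n : ℕ) : K :=
  ((n : K) ^ 2 - 1) * s ^ 2 + 3 * n * s * c + 3 * c ^ 2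

def invCubeGenFun [Field K] (s c z : K) : K :=
  4 * s ^ 2 / (1 - z) ^ 3 + 6 * s * (c - s) / (1 - z) ^ 2 + 6 * c * (c - s) / (1 - z) -
    invCubeCoeff s c 0

lemma invCubeCoeff_nonneg [CommRing K] [LinearOrder K] [IsStrictOrderedRing K] {s c : K}
    (hs : 0 ≤ s) (hsc : s ≤ c) (n : ℕ) : 0 ≤ invCubeCoeff s c n := by
  have h₁ : 0 ≤ (n : K) ^ 2 * s ^ 2 := by positivity
  have h₂ : 0 ≤ 3 * n * s * c := mul_nonneg (by positivity) (hs.trans hsc)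
  have h₃ : s ^ 2 ≤ c ^ 2 := pow_le_pow_left₀ hs hsc 2
  unfold invCubeCoeff
  nlinarith

/-- With `q = e^{-η}` and `w = e^{iψ}`, the arguments are `s = sinh η`, `c = cosh η`, `z = q w`,
`z̄ = q / w`, and `(w + w⁻¹) / 2 = cos ψ`. -/
lemma invCubeGenFun_mul_add_invCubeGenFun_div [Field K] {q w : K} (hq : q ≠ 0) (hw : w ≠ 0)
    (hqw : q * w ≠ 1) (hqw' : q ≠ w) :
    invCubeGenFun ((q⁻¹ - q) / 2) ((q⁻¹ + q) / 2) (q * w) +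
        invCubeGenFun ((q⁻¹ - q) / 2) ((q⁻¹ + q) / 2) (q / w) =
      4 * ((q⁻¹ - q) / 2) ^ 5 / ((q⁻¹ + q) / 2 - (w + w⁻¹) / 2) ^ 3 := by
  have h₁ : 1 - q * w ≠ 0 := sub_ne_zero.2 hqw.symm
  have h₂ : w - q ≠ 0 := sub_ne_zero.2 hqw'.symm
  have hden : (q⁻¹ + q) / 2 - (w + w⁻¹) / 2 = (1 - q * w) * (w - q) / (2 * q * w) := by
    field_simp
    ring
  have hdiv : 1 - q / w = (w - q) / w := by field_simp
  rw [hden, invCubeGenFun, invCubeGenFun, hdiv, invCubeCoeff]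
  field_simp
  ring

lemma hasSum_two_mul_invCubeCoeff_mul_pow [NormedField K] (s c : K) {z : K} (hz : ‖z‖ < 1) :
    HasSum (fun n ↦ 2 * (invCubeCoeff s c n * z ^ n))
      (4 * s ^ 2 / (1 - z) ^ 3 + 6 * s * (c - s) / (1 - z) ^ 2 + 6 * c * (c - s) / (1 - z)) := by
  have h k := hasSum_choose_mul_geometric_of_norm_lt_one k hz
  have H := ((h 2).mul_left (4 * s ^ 2)).add ((h 1).mul_left (6 * s * (c - s))) |>.add
    ((h 0).mul_left (6 * c * (c - s)))
  rw [show 4 * s ^ 2 / (1 - z) ^ 3 + 6 * s * (c - s) / (1 - z) ^ 2 + 6 * c * (c - s) / (1 - z) =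
    4 * s ^ 2 * (1 / (1 - z) ^ (2 + 1)) + 6 * s * (c - s) * (1 / (1 - z) ^ (1 + 1)) +
      6 * c * (c - s) * (1 / (1 - z) ^ (0 + 1)) by ring]
  refine H.congr_fun fun n ↦ ?_
  have hchoose : (n + 2) * (n + 1) = (n + 2).choose 2 * 2 := by
    have := Nat.add_one_mul_choose_eq (n + 1) 1
    rwa [Nat.choose_one_right] at this
  replace hchoose := congrArg (Nat.cast : ℕ → K) hchoose
  simp only [invCubeCoeff, Nat.choose_one_right, Nat.choose_zero_right]
  push_cast at hchoose ⊢
  linear_combination (2 * s ^ 2 * z ^ n) * hchoose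

end

lemma abs_neumann_le_two (n : ℕ) : |neumann n| ≤ 2 := by
  unfold neumann
  split_ifs <;> norm_num

lemma hasSum_neumann_mul {𝕜 : Type*} [RCLike 𝕜] {f : ℕ → 𝕜} {a : 𝕜}
    (h : HasSum (fun n ↦ 2 * f n) a) : HasSum (fun n ↦ (neumann n : 𝕜) * f n) (a - f 0) := by
  refine (h.sub (hasSum_ite_eq 0 (f 0))).congr_fun fun n ↦ ?_
  rcases eq_or_ne n 0 with rfl | hn
  · rw [neumann, if_pos rfl, if_pos rfl, RCLike.ofReal_one]
    ring
  · rw [neumann, if_neg hn, if_neg hn, RCLike.ofReal_ofNat, sub_zero]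

lemma hasSum_neumann_mul_invCubeCoeff_mul_pow (s c : ℂ) {z : ℂ} (hz : ‖z‖ < 1) :
    HasSum (fun n ↦ (neumann n : ℂ) * invCubeCoeff s c n * z ^ n) (invCubeGenFun s c z) := by
  have h := hasSum_neumann_mul (hasSum_two_mul_invCubeCoeff_mul_pow s c hz)
  rw [invCubeGenFun]
  simp only [pow_zero, mul_one, ← mul_assoc] at h
  exact h

lemma Complex.ofReal_invCubeCoeff (s c : ℝ) (n : ℕ) :
    ((invCubeCoeff s c n : ℝ) : ℂ) = invCubeCoeff (s : ℂ) c n := by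
  simp [invCubeCoeff]

lemma Complex.ofReal_cos_eq_exp_add_inv (x : ℝ) :
    (Real.cos x : ℂ) = (cexp (x * I) + (cexp (x * I))⁻¹) / 2 := by
  rw [ofReal_cos, Complex.cos, neg_mul, Complex.exp_neg]

lemma Complex.ofReal_cos_mul_exp_eq_pow_add_pow (η ψ : ℝ) (n : ℕ) :
    ((Real.cos (n * ψ) * Real.exp (-(n : ℝ) * η) : ℝ) : ℂ) =
      ((cexp (-η) * cexp (ψ * I)) ^ n + (cexp (-η) / cexp (ψ * I)) ^ n) / 2 := by
  rw [mul_pow, div_pow, ← Complex.exp_nat_mul, ← Complex.exp_nat_mul, Complex.ofReal_mul,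
    Complex.ofReal_cos_eq_exp_add_inv, Complex.ofReal_exp]
  push_cast
  ring_nf

lemma hasSum_neumann_mul_cos_mul_exp_mul_invCubeCoeff {η : ℝ} (hη : 0 < η) (ψ : ℝ) :
    HasSum (fun n : ℕ ↦ neumann n * Real.cos (n * ψ) * Real.exp (-(n : ℝ) * η) *
        invCubeCoeff (Real.sinh η) (Real.cosh η) n)
      (2 * Real.sinh η ^ 5 / (Real.cosh η - Real.cos ψ) ^ 3) := by
  have hs : (Real.sinh η : ℂ) = ((cexp (-η))⁻¹ - cexp (-η)) / 2 := by
    rw [ofReal_sinh, Complex.sinh, Complex.exp_neg, inv_inv]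
  have hc : (Real.cosh η : ℂ) = ((cexp (-η))⁻¹ + cexp (-η)) / 2 := by
    rw [ofReal_cosh, Complex.cosh, Complex.exp_neg, inv_inv]
  set q := cexp (-η) with hq_def
  set w := cexp (ψ * I) with hw_def
  have hq : ‖q‖ < 1 := by simpa [q, Complex.norm_exp] using hη
  have hw : ‖w‖ = 1 := Complex.norm_exp_ofReal_mul_I ψ
  have hqw : ‖q * w‖ < 1 := by rwa [norm_mul, hw, mul_one]
  have hqw' : ‖q / w‖ < 1 := by rwa [norm_div, hw, div_one]
  have hval : invCubeGenFun (Real.sinh η : ℂ) (Real.cosh η) (q * w) +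
      invCubeGenFun (Real.sinh η : ℂ) (Real.cosh η) (q / w) =
        4 * (Real.sinh η : ℂ) ^ 5 / ((Real.cosh η : ℂ) - Real.cos ψ) ^ 3 := by
    rw [hs, hc, Complex.ofReal_cos_eq_exp_add_inv, invCubeGenFun_mul_add_invCubeGenFun_div
      (Complex.exp_ne_zero _) (Complex.exp_ne_zero _)
      (ne_of_apply_ne norm (by rw [norm_one]; exact hqw.ne))
      (ne_of_apply_ne norm (by rw [hw]; exact hq.ne))]
  have H := ((hasSum_neumann_mul_invCubeCoeff_mul_pow (Real.sinh η : ℂ) (Real.cosh η) hqw).add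
    (hasSum_neumann_mul_invCubeCoeff_mul_pow (Real.sinh η : ℂ) (Real.cosh η) hqw')).div_const 2
  rw [hval] at H
  rw [← Complex.hasSum_ofReal,
    show ((2 * Real.sinh η ^ 5 / (Real.cosh η - Real.cos ψ) ^ 3 : ℝ) : ℂ) =
      4 * (Real.sinh η : ℂ) ^ 5 / ((Real.cosh η : ℂ) - Real.cos ψ) ^ 3 / 2 by push_cast; ring]
  refine H.congr_fun fun n ↦ ?_
  calc _ = neumann n * ((invCubeCoeff (Real.sinh η) (Real.cosh η) n : ℝ) : ℂ) *
        ((Real.cos (n * ψ) * Real.exp (-(n : ℝ) * η) : ℝ) : ℂ) := by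
        push_cast
        ring
    _ = _ := by
        rw [Complex.ofReal_invCubeCoeff, Complex.ofReal_cos_mul_exp_eq_pow_add_pow, ← hq_def,
          ← hw_def]
        ring

lemma summable_abs_neumann_mul_cos_mul_exp_mul_invCubeCoeff {η : ℝ} (hη : 0 < η) (ψ : ℝ) :
    Summable (fun n : ℕ ↦ |neumann n * Real.cos (n * ψ) * Real.exp (-(n : ℝ) * η) *
        invCubeCoeff (Real.sinh η) (Real.cosh η) n|) := by
  have hr : ‖Real.exp (-η)‖ < 1 := by simpa using hη
  refine .of_nonneg_of_le (fun n ↦ abs_nonneg _) (fun n ↦ ?_)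
    (hasSum_two_mul_invCubeCoeff_mul_pow (Real.sinh η) (Real.cosh η) hr).summable
  have hcoeff := invCubeCoeff_nonneg (Real.sinh_nonneg_iff.2 hη.le) (Real.sinh_lt_cosh η).le n
  rw [abs_mul, abs_mul, abs_mul, abs_of_nonneg hcoeff, abs_of_pos (Real.exp_pos _),
    neg_mul, ← mul_neg, Real.exp_nat_mul]
  calc _ ≤ 2 * 1 * Real.exp (-η) ^ n * invCubeCoeff (Real.sinh η) (Real.cosh η) n := by
        gcongr
        · exact abs_neumann_le_two n
        · exact Real.abs_cos_le_one _
    _ = _ := by ring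

theorem inv_cube_cosh_sub_cos_fourier (η ψ : ℝ) (hη : 0 < η) :
    (Summable fun n : ℕ =>
      |neumann n * Real.cos (n * ψ) * Real.exp (-(n : ℝ) * η) *
        (((n : ℝ) ^ 2 - 1) * Real.sinh η ^ 2 + 3 * n * Real.sinh η * Real.cosh η +
          3 * Real.cosh η ^ 2)|) ∧
    1 / (Real.cosh η - Real.cos ψ) ^ 3 =
      (1 / (2 * Real.sinh η ^ 5)) *
        ∑' n : ℕ, neumann n * Real.cos (n * ψ) * Real.exp (-(n : ℝ) * η) *
          (((n : ℝ) ^ 2 - 1) * Real.sinh η ^ 2 + 3 * n * Real.sinh η * Real.cosh η +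
            3 * Real.cosh η ^ 2) := by
  have h := hasSum_neumann_mul_cos_mul_exp_mul_invCubeCoeff hη ψ
  unfold invCubeCoeff at h
  refine ⟨summable_abs_neumann_mul_cos_mul_exp_mul_invCubeCoeff hη ψ, ?_⟩
  have hs : Real.sinh η ≠ 0 := (Real.sinh_pos_iff.2 hη).ne'
  rw [h.tsum_eq]
  field_simp
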